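/- Let ω : ℝ → ℝ be continuous, let Ω(p) = ∫₀^p ω(r) dr, let σ₀ = √(2·max(0, sup_{p∈[0,1]} Ω(p))), and define on the interval I = (σ₀, ∞) the functions d(s) = ∫₀¹ (s² − 2Ω(τ))^{−1/2} dτ and 𝓡(s) = (1/2)s² + d(s) − Ω(1). Then 𝓡 is continuous on I, 𝓡(s) → ∞ as s → ∞, and for every R > R_c := inf_{s∈I} 𝓡(s) there exists s ∈ I with 𝓡(s) = R (i.e., the Bernoulli equation 𝓡(s) = R is solvable whenever R > R_c). -/

import Mathlib

/-!
Since `σ₀² ≥ 2 Ω` on `[0, 1]`, the integrand `(s² − 2Ω(τ))^{-1/2}` of `d` is jointly continuous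
on `(σ₀, ∞) × [0, 1]`, so `d`, and with it `𝓡`, is continuous on `(σ₀, ∞)`. As `d ≥ 0`,
`𝓡(s) ≥ s²/2 − Ω(1) → ∞`. For `R > R_c` pick `s₁` with `𝓡(s₁) < R` and `s₂ ≥ s₁` with
`𝓡(s₂) ≥ R`; the intermediate value theorem on `[s₁, s₂]` gives the solution.
-/

open MeasureTheory Set Filter Function

theorem continuousOn_intervalIntegral_of_continuousOn_prod {X E : Type*} [TopologicalSpace X]
    [NormedAddCommGroup E] [NormedSpace ℝ E] {f : X → ℝ → E} {U : Set X} {a b : ℝ}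
    (hab : a ≤ b) (hf : ContinuousOn (uncurry f) (U ×ˢ Icc a b)) :
    ContinuousOn (fun x => ∫ t in a..b, f x t) U := by
  rw [continuousOn_iff_continuous_domRestrict]
  -- Clamping `t` into `[a, b]` makes the integrand jointly continuous on all of `U × ℝ`
  -- without changing the integral.
  have hg : Continuous fun p : U × ℝ => f p.1 (projIcc a b hab p.2) :=
    hf.comp_continuous
      (continuous_subtype_val.prodMap (continuous_subtype_val.comp (continuous_projIcc (h := hab))))
      fun p => ⟨p.1.2, (projIcc a b hab p.2).2⟩
  refine (intervalIntegral.continuous_parametric_intervalIntegral_of_continuous'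
    (f := fun (x : U) t => f x (projIcc a b hab t)) hg a b).congr
    fun x => intervalIntegral.integral_congr fun t ht => ?_
  rw [uIcc_of_le hab] at ht
  simp [projIcc_of_mem hab ht]

theorem two_mul_le_sq_sqrt_two_mul_max_sSup {α : Type*} {Ω : α → ℝ} {K : Set α}
    (hK : BddAbove (Ω '' K)) {x : α} (hx : x ∈ K) :
    2 * Ω x ≤ √(2 * max 0 (sSup (Ω '' K))) ^ 2 := by
  rw [Real.sq_sqrt (by positivity)]
  have := le_csSup hK (mem_image_of_mem Ω hx)
  linarith [le_max_right 0 (sSup (Ω '' K))]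

theorem continuousOn_integral_inv_sqrt_sq_sub {Ω : ℝ → ℝ} {a b σ : ℝ} (hab : a ≤ b)
    (hΩ : ContinuousOn Ω (Icc a b)) (hσ : 0 ≤ σ) (hle : ∀ τ ∈ Icc a b, 2 * Ω τ ≤ σ ^ 2) :
    ContinuousOn (fun s => ∫ τ in a..b, (√(s ^ 2 - 2 * Ω τ))⁻¹) (Ioi σ) := by
  refine continuousOn_intervalIntegral_of_continuousOn_prod hab (ContinuousOn.inv₀ ?_ ?_)
  · exact (continuousOn_fst.pow 2 |>.sub <| continuousOn_const.mul <|
      hΩ.comp continuousOn_snd fun p hp => hp.2).sqrt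
  · rintro ⟨s, τ⟩ ⟨hs, hτ⟩
    have : σ ^ 2 < s ^ 2 := pow_lt_pow_left₀ hs hσ two_ne_zero
    exact (Real.sqrt_pos.2 (by linarith [hle τ hτ])).ne'

theorem exists_eq_of_csInf_lt_of_tendsto_atTop {α δ : Type*}
    [ConditionallyCompleteLinearOrder α] [TopologicalSpace α] [OrderTopology α]
    [DenselyOrdered α] [NoMaxOrder α]
    [ConditionallyCompleteLinearOrder δ] [TopologicalSpace δ] [OrderClosedTopology δ]
    {f : α → δ} {a : α} (hf : ContinuousOn f (Ioi a)) (htop : Tendsto f atTop atTop) {R : δ}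
    (hR : sInf (f '' Ioi a) < R) : ∃ s ∈ Ioi a, f s = R := by
  obtain ⟨_, ⟨s₁, hs₁, rfl⟩, hs₁R⟩ := exists_lt_of_csInf_lt (nonempty_Ioi.image f) hR
  obtain ⟨s₂, hs₂R, hs₁₂⟩ :=
    ((htop.eventually_ge_atTop R).and (eventually_ge_atTop s₁)).exists
  have hsub : Icc s₁ s₂ ⊆ Ioi a := fun x hx => hs₁.trans_le hx.1
  obtain ⟨s, hs, rfl⟩ := intermediate_value_Icc hs₁₂ (hf.mono hsub) ⟨hs₁R.le, hs₂R⟩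
  exact ⟨s, hsub hs, rfl⟩

theorem tendsto_half_sq_add_sub_atTop {d : ℝ → ℝ} (hd : ∀ s, 0 ≤ d s) (c : ℝ) :
    Tendsto (fun s => 1 / 2 * s ^ 2 + d s - c) atTop atTop := by
  refine tendsto_atTop_mono (fun s => by linarith [hd s]) <|
    tendsto_atTop_add_const_right _ (-c) <|
      (tendsto_pow_atTop two_ne_zero).const_mul_atTop one_half_pos

/-- The Bernoulli function `𝓡(s) = s²/2 + d(s) − Ω(1)` of the uniform stream
is continuous on `I = (σ₀, ∞)`, tends to `∞` as `s → ∞`, and for every `R > R_c = inf_I 𝓡`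
the Bernoulli equation `𝓡(s) = R` has a solution `s ∈ I`. -/
theorem stmt_4 (ω : ℝ → ℝ) (hω : Continuous ω)
    (Ω : ℝ → ℝ) (hΩ : ∀ p, Ω p = ∫ r in (0:ℝ)..p, ω r)
    (σ₀ : ℝ) (hσ₀ : σ₀ = Real.sqrt (2 * max 0 (sSup (Ω '' Set.Icc 0 1))))
    (d : ℝ → ℝ)
    (hd : ∀ s, d s = ∫ τ in (0:ℝ)..1, (Real.sqrt (s ^ 2 - 2 * Ω τ))⁻¹)
    (Rfun : ℝ → ℝ) (hRfun : ∀ s, Rfun s = (1 / 2) * s ^ 2 + d s - Ω 1)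
    (Rc : ℝ) (hRc : Rc = sInf (Rfun '' Set.Ioi σ₀)) :
    ContinuousOn Rfun (Set.Ioi σ₀) ∧
    Filter.Tendsto Rfun Filter.atTop Filter.atTop ∧
    ∀ R : ℝ, Rc < R → ∃ s ∈ Set.Ioi σ₀, Rfun s = R := by
  have hΩc : Continuous Ω := by
    rw [funext hΩ]
    exact intervalIntegral.continuous_primitive (fun a b => hω.intervalIntegrable a b) 0
  have hσ₀_nonneg : 0 ≤ σ₀ := hσ₀ ▸ Real.sqrt_nonneg _
  have hΩ_le : ∀ τ ∈ Icc (0:ℝ) 1, 2 * Ω τ ≤ σ₀ ^ 2 := fun τ hτ =>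
    hσ₀ ▸ two_mul_le_sq_sqrt_two_mul_max_sSup (isCompact_Icc.image hΩc).bddAbove hτ
  have hd_nonneg : ∀ s, 0 ≤ d s := fun s => by
    rw [hd]
    exact intervalIntegral.integral_nonneg zero_le_one fun τ _ => by positivity
  have hd_cont : ContinuousOn d (Ioi σ₀) := by
    rw [funext hd]
    exact continuousOn_integral_inv_sqrt_sq_sub zero_le_one hΩc.continuousOn hσ₀_nonneg hΩ_le
  obtain rfl : Rfun = fun s => 1 / 2 * s ^ 2 + d s - Ω 1 := funext hRfun
  have hcont : ContinuousOn (fun s => 1 / 2 * s ^ 2 + d s - Ω 1) (Ioi σ₀) :=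
    ((continuousOn_const.mul (continuousOn_id.pow 2)).add hd_cont).sub continuousOn_const
  have htop := tendsto_half_sq_add_sub_atTop hd_nonneg (Ω 1)
  exact ⟨hcont, htop, fun R hR => exists_eq_of_csInf_lt_of_tendsto_atTop hcont htop (hRc ▸ hR)⟩
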